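/- Let L be a random variable satisfying exp(-Δ·S/2) ≤ L ≤ exp(-Δ·I/2) almost surely, for real constants I ≤ S and Δ > 0. Then for any random variable G ∈ L², |E[(L/E[L])·G] - E[G]| ≤ (1/2)(exp(Δ(S-I)/2) - 1)·(E[G²])^{1/2}. -/

import Mathlib

/-!
For `a ≤ L ≤ b`, normalising gives `X = L / 𝔼[L]` with `𝔼[X] = 1`, so the quantity to bound is
`𝔼[(X - 1) G]`. Cauchy–Schwarz bounds it by `√Var(X) · ‖G‖₂`, and Popoviciu's inequality bounds
`Var(X)` by a quarter of the squared length of the range of `X`, which is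
`(b - a) / 𝔼[L] ≤ b / a - 1` because `𝔼[L] ≥ a`.
-/

open MeasureTheory ProbabilityTheory

section

variable {Ω : Type*} [MeasurableSpace Ω]

lemma abs_integral_mul_le_sqrt_integral_sq_mul_sqrt_integral_sq {μ : Measure Ω} {f g : Ω → ℝ}
    (hf : MemLp f 2 μ) (hg : MemLp g 2 μ) :
    |∫ ω, f ω * g ω ∂μ| ≤ √(∫ ω, f ω ^ 2 ∂μ) * √(∫ ω, g ω ^ 2 ∂μ) := by
  have abs_rpow_two (h : Ω → ℝ) : ∫ ω, |h ω| ^ (2 : ℝ) ∂μ = ∫ ω, h ω ^ 2 ∂μ := by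
    simp only [Real.rpow_two, sq_abs]
  have holder := integral_mul_le_Lp_mul_Lq_of_nonneg Real.HolderConjugate.two_two
    (Filter.Eventually.of_forall fun ω => abs_nonneg (f ω))
    (Filter.Eventually.of_forall fun ω => abs_nonneg (g ω))
    (by simpa using hf.norm) (by simpa using hg.norm)
  rw [abs_rpow_two, abs_rpow_two, ← Real.sqrt_eq_rpow, ← Real.sqrt_eq_rpow] at holder
  calc |∫ ω, f ω * g ω ∂μ| ≤ ∫ ω, |f ω * g ω| ∂μ := abs_integral_le_integral_abs
    _ = ∫ ω, |f ω| * |g ω| ∂μ := by simp only [abs_mul]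
    _ ≤ _ := holder

variable {P : Measure Ω} [IsProbabilityMeasure P]

lemma abs_integral_mul_sub_integral_le {X G : Ω → ℝ} {a b : ℝ} (hX : AEMeasurable X P)
    (hXab : ∀ᵐ ω ∂P, X ω ∈ Set.Icc a b) (hX1 : ∫ ω, X ω ∂P = 1) (hG : MemLp G 2 P) :
    |∫ ω, X ω * G ω ∂P - ∫ ω, G ω ∂P| ≤ (b - a) / 2 * √(∫ ω, G ω ^ 2 ∂P) := by
  obtain ⟨ω₀, hω₀⟩ := hXab.exists
  have hXL2 : MemLp X 2 P := memLp_of_bounded hXab hX.aestronglyMeasurable 2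
  have hvar : ∫ ω, (X ω - 1) ^ 2 ∂P ≤ ((b - a) / 2) ^ 2 := by
    simpa [variance_eq_integral hX, hX1] using variance_le_sq_of_bounded hXab hX
  have hcentered : ∫ ω, X ω * G ω ∂P - ∫ ω, G ω ∂P = ∫ ω, (X ω - 1) * G ω ∂P := by
    have hXG : Integrable (fun ω => X ω * G ω) P := hXL2.integrable_mul hG
    rw [← integral_sub hXG (hG.integrable one_le_two)]
    simp only [sub_one_mul]
  calc |∫ ω, X ω * G ω ∂P - ∫ ω, G ω ∂P|
      ≤ √(∫ ω, (X ω - 1) ^ 2 ∂P) * √(∫ ω, G ω ^ 2 ∂P) := by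
        rw [hcentered]
        exact abs_integral_mul_le_sqrt_integral_sq_mul_sqrt_integral_sq
          (hXL2.sub (memLp_const 1)) hG
    _ ≤ (b - a) / 2 * √(∫ ω, G ω ^ 2 ∂P) := by
        gcongr
        rw [← Real.sqrt_sq (by linarith [hω₀.1, hω₀.2] : 0 ≤ (b - a) / 2)]
        exact Real.sqrt_le_sqrt hvar

lemma abs_integral_div_integral_mul_sub_integral_le {L G : Ω → ℝ} {a b : ℝ} (ha : 0 < a)
    (hLmeas : AEMeasurable L P) (hL : ∀ᵐ ω ∂P, L ω ∈ Set.Icc a b) (hG : MemLp G 2 P) :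
    |∫ ω, (L ω / ∫ ω', L ω' ∂P) * G ω ∂P - ∫ ω, G ω ∂P| ≤
      1 / 2 * (b / a - 1) * √(∫ ω, G ω ^ 2 ∂P) := by
  set m := ∫ ω, L ω ∂P
  obtain ⟨ω₀, hω₀⟩ := hL.exists
  have hLint : Integrable L P := (memLp_of_bounded hL hLmeas.aestronglyMeasurable 1).integrable le_rfl
  have ham : a ≤ m := by
    simpa using integral_mono_ae (integrable_const a) hLint (hL.mono fun _ h => h.1)
  have hm : 0 < m := ha.trans_le ham
  have hX : ∀ᵐ ω ∂P, L ω / m ∈ Set.Icc (a / m) (b / m) :=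
    hL.mono fun _ h => ⟨by gcongr; exact h.1, by gcongr; exact h.2⟩
  have hX1 : ∫ ω, L ω / m ∂P = 1 := by rw [integral_div, div_self hm.ne']
  calc _ ≤ (b / m - a / m) / 2 * √(∫ ω, G ω ^ 2 ∂P) :=
        abs_integral_mul_sub_integral_le (hLmeas.div_const m) hX hX1 hG
    _ ≤ 1 / 2 * (b / a - 1) * √(∫ ω, G ω ^ 2 ∂P) := by
        gcongr
        rw [← sub_div, div_sub_one ha.ne']
        have : 0 ≤ b - a := by linarith [hω₀.1, hω₀.2]
        linarith [div_le_div_of_nonneg_left this ha ham]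

end

theorem stmt_7_general {Ω : Type*} [MeasurableSpace Ω] (P : Measure Ω) [IsProbabilityMeasure P]
    (L G : Ω → ℝ) (hLmeas : Measurable L)
    (I S Δ : ℝ)
    (hL : ∀ᵐ ω ∂P, L ω ∈ Set.Icc (Real.exp (-Δ * S / 2)) (Real.exp (-Δ * I / 2)))
    (hG2 : Integrable (fun ω => (G ω) ^ 2) P) (hGint : Integrable G P) :
    |(∫ ω, (L ω / ∫ ω', L ω' ∂P) * G ω ∂P) - ∫ ω, G ω ∂P| ≤
      (1 / 2) * (Real.exp (Δ * (S - I) / 2) - 1) * (∫ ω, (G ω) ^ 2 ∂P) ^ ((1 : ℝ) / 2) := by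
  have hexp : Real.exp (Δ * (S - I) / 2) = Real.exp (-Δ * I / 2) / Real.exp (-Δ * S / 2) := by
    rw [← Real.exp_sub]
    ring_nf
  rw [hexp, ← Real.sqrt_eq_rpow]
  exact abs_integral_div_integral_mul_sub_integral_le (Real.exp_pos _) hLmeas.aemeasurable hL
    ((memLp_two_iff_integrable_sq hGint.aestronglyMeasurable).2 hG2)

theorem stmt_7 {Ω : Type*} [MeasurableSpace Ω] (P : Measure Ω) [IsProbabilityMeasure P]
    (L G : Ω → ℝ) (hLmeas : Measurable L) (hGmeas : Measurable G)
    (I S Δ : ℝ) (hIS : I ≤ S) (hΔ : 0 < Δ)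
    (hL : ∀ᵐ ω ∂P, L ω ∈ Set.Icc (Real.exp (-Δ * S / 2)) (Real.exp (-Δ * I / 2)))
    (hG2 : Integrable (fun ω => (G ω) ^ 2) P) (hGint : Integrable G P) :
    |(∫ ω, (L ω / ∫ ω', L ω' ∂P) * G ω ∂P) - ∫ ω, G ω ∂P| ≤
      (1 / 2) * (Real.exp (Δ * (S - I) / 2) - 1) * (∫ ω, (G ω) ^ 2 ∂P) ^ ((1 : ℝ) / 2) :=
  stmt_7_general P L G hLmeas I S Δ hL hG2 hGint
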